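/- For every integer t ≥ 3, the linear 3-clique K̃_t is balanced with respect to the maximum subhypergraph density, i.e. m(K̃_t) = e(K̃_t)/v(K̃_t) = C(t,2)/(t + C(t,2)). -/

import Mathlib

open Finset Filter

attribute [local instance] Classical.propDecidable

/-- A hypergraph: a finite vertex set and a finite edge set (edges are finite
vertex sets; for 3-graphs all edges have three elements). -/
structure H3 where
  verts : Finset ℕ
  edges : Finset (Finset ℕ)

/-- The subhypergraph relation. -/
def H3.Sub (F H : H3) : Prop :=
  F.verts ⊆ H.verts ∧ F.edges ⊆ H.edges ∧ ∀ e ∈ F.edges, e ⊆ F.verts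

/-- The density `d₃` of a 3-graph. -/
noncomputable def d3 (F : H3) : ℝ :=
  if F.edges.card = 0 then 0
  else if F.edges.card = 1 ∧ F.verts.card = 3 then 1 / 3
  else ((F.edges.card : ℝ) - 1) / ((F.verts.card : ℝ) - 3)

/-- The maximal 3-density `m₃`. -/
noncomputable def m3 (H : H3) : ℝ :=
  sSup {x : ℝ | ∃ F : H3, F.Sub H ∧ x = d3 F}

/-- The asymmetric maximal 3-density `m₃(H₁,H₂)`. -/
noncomputable def m3Asym (H1 H2 : H3) : ℝ :=
  sSup {x : ℝ | ∃ F : H3, F.Sub H1 ∧ 1 ≤ F.edges.card ∧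
    x = (F.edges.card : ℝ) / ((F.verts.card : ℝ) - 3 + 1 / m3 H2)}

/-- The maximum subhypergraph density `m(H)`. -/
noncomputable def mDen (H : H3) : ℝ :=
  sSup {x : ℝ | ∃ F : H3, F.Sub H ∧ 1 ≤ F.verts.card ∧
    x = (F.edges.card : ℝ) / (F.verts.card : ℝ)}

/-- The canonical linear 3-clique `K̃_t`: branch vertices `0,…,t-1`; the pair
`(i,j)` with `i<j<t` gets the apex vertex `t + (C(j,2) + i)`, and the map
`(i,j) ↦ C(j,2) + i` is a bijection onto `[0, C(t,2))`. -/
noncomputable def linClique (t : ℕ) : H3 where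
  verts := Finset.range (t + t.choose 2)
  edges := ((Finset.range t ×ˢ Finset.range t).filter fun p => p.1 < p.2).image
    fun p => {p.1, p.2, t + (p.2.choose 2 + p.1)}

/-- `v(K̃_t)`. -/
def vOf (t : ℕ) : ℕ := t + t.choose 2

/-- `(cV, cE)` is a copy of the hypergraph `F` (an isomorphic image of `F`). -/
def IsCopy3 (F : H3) (cV : Finset ℕ) (cE : Finset (Finset ℕ)) : Prop :=
  ∃ φ : ℕ → ℕ, Set.InjOn φ ↑F.verts ∧ cV = F.verts.image φ ∧
    cE = F.edges.image fun e => e.image φ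

/-- The edge set `E` contains a copy of the hypergraph `F`. -/
def ContainsCopy (F : H3) (E : Finset (Finset ℕ)) : Prop :=
  ∃ cV cE, IsCopy3 F cV cE ∧ cE ⊆ E

/-- The edge set `E` induced on `U` contains a copy of the hypergraph `F`. -/
def ContainsCopyWithin (F : H3) (E : Finset (Finset ℕ)) (U : Finset ℕ) : Prop :=
  ∃ cV cE, IsCopy3 F cV cE ∧ cV ⊆ U ∧ cE ⊆ E

/-- The probability that the binomial random 3-graph `ℍ(n,p)` satisfies `P`. -/
noncomputable def PrH (n : ℕ) (p : ℝ) (P : Finset (Finset ℕ) → Prop) : ℝ :=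
  ∑ R ∈ ((Finset.range n).powersetCard 3).powerset,
    if P R then p ^ R.card * (1 - p) ^ (((Finset.range n).powersetCard 3).card - R.card)
    else 0

/-- `E → (F)₂` : every 2-colouring of `E` yields a monochromatic copy of `F`. -/
def Arrow2 (E : Finset (Finset ℕ)) (F : H3) : Prop :=
  ∀ χ : Finset ℕ → Bool, ∃ c : Bool, ContainsCopy F (E.filter fun e => χ e = c)

/-- `E → (F, F')` : every red/blue colouring of `E` yields a red copy of `F`
or a blue copy of `F'`. -/
def ArrowAsym (E : Finset (Finset ℕ)) (F F' : H3) : Prop :=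
  ∀ χ : Finset ℕ → Bool,
    ContainsCopy F (E.filter fun e => χ e = true) ∨
    ContainsCopy F' (E.filter fun e => χ e = false)

/-- `H` is `(F,F')`-Ramsey with respect to `(𝓕,𝓕')`. -/
def RamseyWrt (E : Finset (Finset ℕ)) (F F' : H3) (𝓕 𝓕' : Finset (Finset ℕ)) : Prop :=
  ∀ χ : Finset ℕ → Bool,
    (∃ cV cE, IsCopy3 F cV cE ∧ cE ⊆ E.filter (fun e => χ e = true) ∧ cV ∉ 𝓕) ∨
    (∃ cV cE, IsCopy3 F' cV cE ∧ cE ⊆ E.filter (fun e => χ e = false) ∧ cV ∉ 𝓕')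

/-- The complete bipartite graph between `X` and `Y`, as a set of pairs. -/
noncomputable def K2 (X Y : Finset ℕ) : Finset (Finset ℕ) :=
  (X ×ˢ Y).image fun p => ({p.1, p.2} : Finset ℕ)

/-- `e_G(X,Y)` : the number of edges of `G` with one endpoint in `X` and one in `Y`. -/
noncomputable def e2 (G : Finset (Finset ℕ)) (X Y : Finset ℕ) : ℕ :=
  (G.filter fun e => ∃ x ∈ X, ∃ y ∈ Y, e = {x, y}).card

/-- The graph `G` is `(δ,d)`-regular between `X` and `Y`. -/
def BipRegular (δ d : ℝ) (G : Finset (Finset ℕ)) (X Y : Finset ℕ) : Prop :=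
  ∀ X' ⊆ X, ∀ Y' ⊆ Y,
    |(e2 G X' Y' : ℝ) - d * X'.card * Y'.card| ≤ δ * X.card * Y.card

/-- `e_H(X,Y,Z)` : the number of edges of the 3-graph `E` meeting `X`, `Y` and `Z`. -/
noncomputable def e3 (E : Finset (Finset ℕ)) (X Y Z : Finset ℕ) : ℕ :=
  (E.filter fun e => ∃ x ∈ X, ∃ y ∈ Y, ∃ z ∈ Z, e = {x, y, z}).card

/-- The 3-graph `E` is `(δ,d)`-weakly-regular on `(X,Y,Z)`. -/
def WeakRegularWith (δ d : ℝ) (E : Finset (Finset ℕ)) (X Y Z : Finset ℕ) : Prop :=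
  ∀ X' ⊆ X, ∀ Y' ⊆ Y, ∀ Z' ⊆ Z,
    |(e3 E X' Y' Z' : ℝ) - d * X'.card * Y'.card * Z'.card| ≤
      δ * X.card * Y.card * Z.card

/-- The 3-graph `E` is `δ`-weakly-regular on `(X,Y,Z)`. -/
def WeakRegular (δ : ℝ) (E : Finset (Finset ℕ)) (X Y Z : Finset ℕ) : Prop :=
  WeakRegularWith δ ((e3 E X Y Z : ℝ) / (X.card * Y.card * Z.card)) E X Y Z

/-- The 3-graph `E` is `δ`-weakly-regular with respect to the vertex partition `V`. -/
def WeakRegWrt (δ : ℝ) (E : Finset (Finset ℕ)) {t : ℕ} (V : Fin t → Finset ℕ) : Prop :=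
  let bad : Finset (Fin t × Fin t × Fin t) :=
    Finset.univ.filter fun x =>
      x.1 < x.2.1 ∧ x.2.1 < x.2.2 ∧ ¬ WeakRegular δ E (V x.1) (V x.2.1) (V x.2.2)
  (bad.card : ℝ) ≤ δ * (t.choose 3)

/-- `K_3(G)` on parts `(X,Y,Z)` : the triangles of `G` with one vertex in each part,
as a set of vertex triples. -/
noncomputable def triSets (G : Finset (Finset ℕ)) (X Y Z : Finset ℕ) : Finset (Finset ℕ) :=
  ((X ×ˢ Y ×ˢ Z).filter fun p =>
      ({p.1, p.2.1} : Finset ℕ) ∈ G ∧ ({p.1, p.2.2} : Finset ℕ) ∈ G ∧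
        ({p.2.1, p.2.2} : Finset ℕ) ∈ G).image fun p => ({p.1, p.2.1, p.2.2} : Finset ℕ)

/-- The relative density `d(E|P)` of a 3-graph `E` with respect to the tripartite
graph `P` on parts `(X,Y,Z)`. -/
noncomputable def relDen (E P : Finset (Finset ℕ)) (X Y Z : Finset ℕ) : ℝ :=
  ((E ∩ triSets P X Y Z).card : ℝ) / ((triSets P X Y Z).card : ℝ)

/-- The 3-graph `E` is `(δ,d,r)`-regular with respect to the tripartite graph `P`
on parts `(X,Y,Z)`. -/
def StrongRegular (δ d : ℝ) (r : ℕ) (E P : Finset (Finset ℕ)) (X Y Z : Finset ℕ) : Prop :=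
  ∀ Q : Fin r → Finset (Finset ℕ), (∀ i, Q i ⊆ P) →
    δ * ((triSets P X Y Z).card : ℝ)
        ≤ (((Finset.univ : Finset (Fin r)).biUnion fun i => triSets (Q i) X Y Z).card : ℝ) →
    0 < δ * ((triSets P X Y Z).card : ℝ) →
    |((E ∩ ((Finset.univ : Finset (Fin r)).biUnion fun i => triSets (Q i) X Y Z)).card : ℝ)
        - d * (((Finset.univ : Finset (Fin r)).biUnion fun i => triSets (Q i) X Y Z).card : ℝ)|
      ≤ δ * ((triSets P X Y Z).card : ℝ)

/-- The triad `B^{ijk}_{αβγ}` of a family of bipartite graphs. -/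
def triadG {t ℓ : ℕ} (B : Fin t → Fin t → Fin ℓ → Finset (Finset ℕ))
    (i j k : Fin t) (α β γ : Fin ℓ) : Finset (Finset ℕ) :=
  B i j α ∪ B i k β ∪ B j k γ

/-- The 3-graph `E` is `(δ,r)`-regular with respect to the partition `B` of the
pairs crossing the vertex partition `V` of `[n]`. -/
def StrongRegWrtB (δ : ℝ) (r : ℕ) (E : Finset (Finset ℕ)) {t ℓ : ℕ}
    (V : Fin t → Finset ℕ) (B : Fin t → Fin t → Fin ℓ → Finset (Finset ℕ)) (n : ℕ) : Prop :=
  let bad : Finset ((Fin t × Fin t × Fin t) × Fin ℓ × Fin ℓ × Fin ℓ) :=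
    Finset.univ.filter fun x =>
      x.1.1 < x.1.2.1 ∧ x.1.2.1 < x.1.2.2 ∧
        ¬ StrongRegular δ
          (relDen E (triadG B x.1.1 x.1.2.1 x.1.2.2 x.2.1 x.2.2.1 x.2.2.2)
            (V x.1.1) (V x.1.2.1) (V x.1.2.2))
          r E (triadG B x.1.1 x.1.2.1 x.1.2.2 x.2.1 x.2.2.1 x.2.2.2)
          (V x.1.1) (V x.1.2.1) (V x.1.2.2)
  ((bad.biUnion fun x =>
      triSets (triadG B x.1.1 x.1.2.1 x.1.2.2 x.2.1 x.2.2.1 x.2.2.2)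
        (V x.1.1) (V x.1.2.1) (V x.1.2.2)).card : ℝ) ≤ δ * (n : ℝ) ^ 3

/-- The joint link graph `⋂_{j} L_H(x_j, P)` of a tuple `x`, supported on the
bipartite part of `P` between `Y` and `Z`. -/
noncomputable def jointLink (EH P : Finset (Finset ℕ)) (Y Z : Finset ℕ) {t : ℕ}
    (x : Fin t → ℕ) : Finset (Finset ℕ) :=
  P.filter fun e => (∃ y ∈ Y, ∃ z ∈ Z, e = {y, z}) ∧ ∀ j : Fin t, insert (x j) e ∈ EH

/-- The joint link graph `L_H(X) = ⋂_{x ∈ X} L_H(x)` of a set `X` of vertices of a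
3-graph on `[n]`. -/
noncomputable def jointLinkSet (n : ℕ) (E : Finset (Finset ℕ)) (X : Finset ℕ) :
    Finset (Finset ℕ) :=
  ((Finset.range n).powersetCard 2).filter fun q => ∀ x ∈ X, insert x q ∈ E

/-- The complete tripartite 3-graph on parts `V1`, `V2`, `V3`. -/
noncomputable def tripartiteEdges (V1 V2 V3 : Finset ℕ) : Finset (Finset ℕ) :=
  (V1 ×ˢ V2 ×ˢ V3).image fun p => ({p.1, p.2.1, p.2.2} : Finset ℕ)

/-- The minimum 1-degree `δ₁` of a 3-graph on `[n]`. -/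
noncomputable def minDeg1 (n : ℕ) (E : Finset (Finset ℕ)) : ℕ :=
  if h : ((Finset.range n).image fun v => (E.filter fun e => v ∈ e).card).Nonempty then
    ((Finset.range n).image fun v => (E.filter fun e => v ∈ e).card).min' h
  else 0

/-- `(cV, cE)` is a copy of the graph `(KV, KE)` (an isomorphic image). -/
def IsCopy2 (KV : Finset ℕ) (KE : Finset (Finset ℕ))
    (cV : Finset ℕ) (cE : Finset (Finset ℕ)) : Prop :=
  ∃ φ : ℕ → ℕ, Set.InjOn φ ↑KV ∧ cV = KV.image φ ∧ cE = KE.image fun e => e.image φ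

lemma two_choose_two (n : ℕ) : 2 * n.choose 2 = n * (n - 1) := by
  induction n with
  | zero => rfl
  | succ m ih =>
    rw [Nat.choose_succ_succ, Nat.choose_one_right, Nat.mul_add, ih]
    cases m with
    | zero => rfl
    | succ k => simp only [Nat.add_sub_cancel]; ring

lemma key_mono {a b b' : ℕ} (hab : a < b) (hbb' : b + 1 ≤ b') :
    b.choose 2 + a < b'.choose 2 := by
  have h1 : (b+1).choose 2 = b + b.choose 2 := by
    rw [Nat.choose_succ_succ]; simp [Nat.choose_one_right]
  have h2 : (b+1).choose 2 ≤ b'.choose 2 := Nat.choose_le_choose 2 hbb'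
  omega

lemma pair_key_inj {i j i' j' : ℕ} (h1 : i < j) (h2 : i' < j')
    (h : j.choose 2 + i = j'.choose 2 + i') : i = i' ∧ j = j' := by
  rcases lt_trichotomy j j' with h' | h' | h'
  · have := key_mono h1 h'; omega
  · subst h'; omega
  · have := key_mono h2 h'; omega

lemma filt_lt {i j c t : ℕ} (h1 : i < j) (hj : j < t) :
    ({i, j, t + c} : Finset ℕ).filter (fun x => x < t) = {i, j} := by
  ext x; simp only [Finset.mem_filter, Finset.mem_insert, Finset.mem_singleton]; omega

lemma filt_ge {i j c t : ℕ} (h1 : i < j) (hj : j < t) :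
    ({i, j, t + c} : Finset ℕ).filter (fun x => ¬ x < t) = {t + c} := by
  ext x; simp only [Finset.mem_filter, Finset.mem_insert, Finset.mem_singleton]; omega

lemma pair_eq {i j i' j' : ℕ} (h1 : i < j) (h2 : i' < j')
    (h : ({i, j} : Finset ℕ) = {i', j'}) : i = i' ∧ j = j' := by
  have hi : i = i' ∨ i = j' := by
    have : i ∈ ({i', j'} : Finset ℕ) := h ▸ (by simp)
    simpa using this
  have hj : j = i' ∨ j = j' := by
    have : j ∈ ({i', j'} : Finset ℕ) := h ▸ (by simp)
    simpa using this
  have hi' : i' = i ∨ i' = j := by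
    have : i' ∈ ({i, j} : Finset ℕ) := by rw [h]; simp
    simpa using this
  omega

lemma edge_form {t : ℕ} {e : Finset ℕ} (he : e ∈ (linClique t).edges) :
    ∃ i j, i < j ∧ j < t ∧ e = {i, j, t + (j.choose 2 + i)} := by
  simp only [linClique, Finset.mem_image, Finset.mem_filter, Finset.mem_product,
    Finset.mem_range] at he
  obtain ⟨⟨a, b⟩, ⟨⟨_, hb⟩, hab⟩, rfl⟩ := he
  exact ⟨a, b, hab, hb, rfl⟩

lemma linClique_verts_card (t : ℕ) : (linClique t).verts.card = t + t.choose 2 := by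
  simp [linClique]

lemma linClique_edges_card (t : ℕ) : (linClique t).edges.card = t.choose 2 := by
  rw [linClique]
  rw [Finset.card_image_of_injOn]
  · rw [Finset.card_filter, Finset.sum_product, Finset.sum_comm]
    have h : ∀ y ∈ Finset.range t,
        (∑ x ∈ Finset.range t, if x < y then 1 else 0) = y := by
      intro y hy
      rw [Finset.sum_boole]
      have : (Finset.range t).filter (fun x => x < y) = Finset.range y := by
        ext x
        simp only [Finset.mem_filter, Finset.mem_range] at *
        omega
      rw [this]
      simp
    rw [Finset.sum_congr rfl h]
    have h2 := Finset.sum_range_id_mul_two t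
    have h3 := two_choose_two t
    omega
  · intro p hp q hq hpq
    simp only [Finset.coe_filter, Set.mem_setOf_eq, Finset.mem_product,
      Finset.mem_range] at hp hq
    obtain ⟨⟨_, hp2⟩, hplt⟩ := hp
    obtain ⟨⟨_, hq2⟩, hqlt⟩ := hq
    have h1 := congrArg (Finset.filter (fun x => x < t)) hpq
    rw [filt_lt hplt hp2, filt_lt hqlt hq2] at h1
    obtain ⟨e1, e2⟩ := pair_eq hplt hqlt h1
    exact Prod.ext e1 e2

lemma linClique_edges_sub {t : ℕ} {e : Finset ℕ} (he : e ∈ (linClique t).edges) :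
    e ⊆ (linClique t).verts := by
  obtain ⟨i, j, hij, hjt, rfl⟩ := edge_form he
  intro x hx
  simp only [Finset.mem_insert, Finset.mem_singleton] at hx
  simp only [linClique, Finset.mem_range]
  have hkey : j.choose 2 + i < t.choose 2 := key_mono hij hjt
  rcases hx with rfl | rfl | rfl <;> omega

lemma linClique_sub_self (t : ℕ) : (linClique t).Sub (linClique t) :=
  ⟨subset_rfl, subset_rfl, fun _ he => linClique_edges_sub he⟩

/-- The key counting bound. -/
lemma upper_bound {t : ℕ} (ht : 3 ≤ t) {F : H3} (hF : F.Sub (linClique t))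
    (hv : 1 ≤ F.verts.card) :
    (F.edges.card : ℝ) / (F.verts.card : ℝ) ≤
      (t.choose 2 : ℝ) / ((t : ℝ) + (t.choose 2 : ℝ)) := by
  obtain ⟨hVsub, hEsub, hEV⟩ := hF
  set B := F.verts.filter (fun x => x < t) with hB
  set A := F.verts.filter (fun x => ¬ x < t) with hA
  have hvab : B.card + A.card = F.verts.card :=
    Finset.card_filter_add_card_filter_not (p := fun x => x < t)
  -- m ≤ A.card
  have hmA : F.edges.card ≤ A.card := by
    have key : F.edges.card ≤ (A.powersetCard 1).card :=
      Finset.card_le_card_of_injOn (fun e => e.filter (fun x => ¬ x < t)) ?_ ?_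
    · calc F.edges.card ≤ (A.powersetCard 1).card := key
        _ = A.card := by rw [Finset.card_powersetCard, Nat.choose_one_right]
    · intro e he
      obtain ⟨i, j, hij, hjt, rfl⟩ := edge_form (hEsub he)
      beta_reduce
      rw [filt_ge hij hjt, Finset.mem_coe, Finset.mem_powersetCard]
      constructor
      · intro x hx
        simp only [Finset.mem_singleton] at hx
        subst hx
        rw [hA, Finset.mem_filter]
        refine ⟨hEV _ he (by simp), by omega⟩
      · simp
    · intro e he e' he' heq
      simp only [Finset.mem_coe] at he he'
      obtain ⟨i, j, hij, hjt, rfl⟩ := edge_form (hEsub he)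
      obtain ⟨i', j', hij', hjt', rfl⟩ := edge_form (hEsub he')
      beta_reduce at heq
      rw [filt_ge hij hjt, filt_ge hij' hjt'] at heq
      have : t + (j.choose 2 + i) = t + (j'.choose 2 + i') := by
        simpa using heq
      obtain ⟨e1, e2⟩ := pair_key_inj hij hij' (by omega)
      rw [e1, e2]
  -- m ≤ C(B.card, 2)
  have hmB : F.edges.card ≤ B.card.choose 2 := by
    have key : F.edges.card ≤ (B.powersetCard 2).card :=
      Finset.card_le_card_of_injOn (fun e => e.filter (fun x => x < t)) ?_ ?_
    · calc F.edges.card ≤ (B.powersetCard 2).card := key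
        _ = B.card.choose 2 := Finset.card_powersetCard 2 B
    · intro e he
      obtain ⟨i, j, hij, hjt, rfl⟩ := edge_form (hEsub he)
      beta_reduce
      rw [filt_lt hij hjt, Finset.mem_coe, Finset.mem_powersetCard]
      constructor
      · intro x hx
        simp only [Finset.mem_insert, Finset.mem_singleton] at hx
        rw [hB, Finset.mem_filter]
        refine ⟨hEV _ he ?_, by omega⟩
        simp only [Finset.mem_insert, Finset.mem_singleton]
        omega
      · rw [Finset.card_insert_of_notMem (by simp; omega), Finset.card_singleton]
    · intro e he e' he' heq
      simp only [Finset.mem_coe] at he he'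
      obtain ⟨i, j, hij, hjt, rfl⟩ := edge_form (hEsub he)
      obtain ⟨i', j', hij', hjt', rfl⟩ := edge_form (hEsub he')
      beta_reduce at heq
      rw [filt_lt hij hjt, filt_lt hij' hjt'] at heq
      obtain ⟨e1, e2⟩ := pair_eq hij hij' heq
      rw [e1, e2]
  -- B.card ≤ t
  have hBt : B.card ≤ t := by
    have : B ⊆ Finset.range t := by
      intro x hx
      rw [hB, Finset.mem_filter] at hx
      simp [hx.2]
    simpa using Finset.card_le_card this
  -- now real arithmetic
  set m := F.edges.card
  set a := A.card
  set b := B.card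
  have h2m : 2 * m ≤ b * (b - 1) := by
    have := two_choose_two b
    omega
  have h2C : 2 * t.choose 2 = t * (t - 1) := two_choose_two t
  rw [div_le_div_iff₀ (by exact_mod_cast hv) (by positivity)]
  -- m * (t + C) ≤ C * v
  have hkey : m * t * 2 ≤ t.choose 2 * b * 2 := by
    calc m * t * 2 = (2 * m) * t := by ring
      _ ≤ (b * (b - 1)) * t := Nat.mul_le_mul_right t h2m
      _ ≤ (b * (t - 1)) * t := by
          have : b - 1 ≤ t - 1 := by omega
          exact Nat.mul_le_mul_right t (Nat.mul_le_mul_left b this)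
      _ = (t * (t - 1)) * b := by ring
      _ = t.choose 2 * b * 2 := by rw [← h2C]; ring
  have hkey' : m * t ≤ t.choose 2 * b :=
    Nat.le_of_mul_le_mul_right hkey (by norm_num)
  have hcast : (m : ℝ) * t ≤ (t.choose 2 : ℝ) * b := by exact_mod_cast hkey'
  have hvge : (m : ℝ) + b ≤ F.verts.card := by
    have : m + b ≤ F.verts.card := by omega
    exact_mod_cast this
  nlinarith [Nat.cast_nonneg (α := ℝ) m, Nat.cast_nonneg (α := ℝ) (t.choose 2),
    Nat.cast_nonneg (α := ℝ) b]

/-- `K̃_t` is balanced: `m(K̃_t) = C(t,2)/(t + C(t,2))`. -/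
theorem linClique_balanced (t : ℕ) (ht : 3 ≤ t) :
    mDen (linClique t) = (t.choose 2 : ℝ) / ((t : ℝ) + (t.choose 2 : ℝ)) := by
  set R := (t.choose 2 : ℝ) / ((t : ℝ) + (t.choose 2 : ℝ)) with hR
  have hub : ∀ x ∈ {x : ℝ | ∃ F : H3, F.Sub (linClique t) ∧ 1 ≤ F.verts.card ∧
      x = (F.edges.card : ℝ) / (F.verts.card : ℝ)}, x ≤ R := by
    rintro x ⟨F, hF, hv, rfl⟩
    exact upper_bound ht hF hv
  have hmem : R ∈ {x : ℝ | ∃ F : H3, F.Sub (linClique t) ∧ 1 ≤ F.verts.card ∧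
      x = (F.edges.card : ℝ) / (F.verts.card : ℝ)} := by
    refine ⟨linClique t, linClique_sub_self t, ?_, ?_⟩
    · rw [linClique_verts_card]; omega
    · rw [linClique_verts_card, linClique_edges_card, hR]
      push_cast
      ring
  apply le_antisymm
  · exact Real.sSup_le hub (by positivity)
  · exact le_csSup ⟨R, hub⟩ hmem
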